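/- Let Y ∈ B(H) be self-adjoint, let m ∈ ℤ_+^k with m ≠ 0, and let Φ = (φ_1,…,φ_k) be a k-tuple of pairwise commuting, power-bounded, positive linear maps on B(H) such that (i) Δ_Φ^m(Y) ≥ 0 and (ii) each φ_i is pure, i.e. φ_i^p(I) → 0 in the strong operator topology as p → ∞. Then Δ_Φ^q(Y) ≥ 0 for every q ∈ ℤ_+^k with q ≤ m; in particular Y ≥ 0. -/

import Mathlib

open Filter Topology
open scoped InnerProductSpace

/-- `Δ_Φ^p := (id − φ_1)^{p_1} ∘ ⋯ ∘ (id − φ_k)^{p_k}` for a `k`-tuple of bounded linear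
maps on `B(H)`. -/
noncomputable def DeltaCLM {H : Type*} [NormedAddCommGroup H] [InnerProductSpace ℂ H]
    {k : ℕ} (φ : Fin k → ((H →L[ℂ] H) →L[ℂ] (H →L[ℂ] H))) (p : Fin k → ℕ) :
    (H →L[ℂ] H) →L[ℂ] (H →L[ℂ] H) :=
  (List.ofFn fun i => ((1 : (H →L[ℂ] H) →L[ℂ] (H →L[ℂ] H)) - φ i) ^ (p i)).prod

/-! For one positive pure map `ψ` and a self-adjoint `X` with `ψ X ≤ X`, monotonicity of the
powers of `ψ` gives `-‖X‖ • ψⁿ(1) ≤ ψⁿ(X) ≤ X`, and `ψⁿ(1) → 0` strongly, so `0 ≤ X`. Thus every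
`1 - φᵢ`, and hence every `Δ_Φ^p`, preserves self-adjointness and reflects positivity of
self-adjoint operators. As the `φᵢ` commute, `Δ_Φ^m = Δ_Φ^{m - q} ∘ Δ_Φ^q`, so `Δ_Φ^m(Y) ≥ 0`
forces `Δ_Φ^q(Y) ≥ 0`. -/

theorem List.prod_ofFn_pow_add {M : Type*} [Monoid M] {n : ℕ} (a : Fin n → M)
    (ha : ∀ i j, Commute (a i) (a j)) (p q : Fin n → ℕ) :
    (List.ofFn fun i => a i ^ (p i + q i)).prod =
      (List.ofFn fun i => a i ^ p i).prod * (List.ofFn fun i => a i ^ q i).prod := by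
  induction n with
  | zero => simp
  | succ n ih =>
    have hcomm : Commute (a 0 ^ q 0) (List.ofFn fun i => a i.succ ^ p i.succ).prod :=
      Commute.list_prod_right _ _ <| List.forall_mem_ofFn_iff.2 fun j => (ha 0 j.succ).pow_pow _ _
    rw [List.ofFn_succ, List.prod_cons, ih (fun i => a i.succ) (fun i j => ha i.succ j.succ),
      List.ofFn_succ, List.prod_cons, List.ofFn_succ, List.prod_cons, pow_add, mul_assoc,
      mul_assoc, hcomm.left_comm]

section

variable {H : Type*} [NormedAddCommGroup H] [InnerProductSpace ℂ H]

local notation "𝔅" => H →L[ℂ] H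

theorem ContinuousLinearMap.nonneg_of_tendsto_add [CompleteSpace H] {X : 𝔅}
    (hX : IsSelfAdjoint X) {A : ℕ → 𝔅} (hA : ∀ x, Tendsto (fun n => A n x) atTop (𝓝 0))
    (h : ∀ n, 0 ≤ X + A n) : 0 ≤ X := by
  rw [nonneg_iff_isPositive]
  refine ⟨hX.isSymmetric, fun x => ?_⟩
  have hlim :
      Tendsto (fun n => (X + A n).reApplyInnerSelf x) atTop (𝓝 (X.reApplyInnerSelf x)) := by
    have := ((Complex.continuous_re.tendsto _).comp ((hA x).inner (tendsto_const_nhds (x := x))))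
    simpa [reApplyInnerSelf, inner_add_left, Function.comp_def] using
      (tendsto_const_nhds (x := X.reApplyInnerSelf x)).add this
  exact ge_of_tendsto' hlim fun n => ((nonneg_iff_isPositive _).1 (h n)).re_inner_nonneg_left x

variable [CompleteSpace H]

theorem ContinuousLinearMap.nonneg_of_nonneg_sub_apply {ψ : 𝔅 →L[ℂ] 𝔅}
    (hψ : ∀ A, 0 ≤ A → 0 ≤ ψ A) (hpure : ∀ x, Tendsto (fun n => (ψ ^ n) 1 x) atTop (𝓝 0))
    {X : 𝔅} (hX : IsSelfAdjoint X) (h : 0 ≤ X - ψ X) : 0 ≤ X := by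
  have hpow : ∀ n A, 0 ≤ A → 0 ≤ (ψ ^ n) A := by
    intro n
    induction n with
    | zero => simp
    | succ n ih => exact fun A hA => by simpa [pow_succ'] using hψ _ (ih A hA)
  have hmono : ∀ n, Monotone ⇑(ψ ^ n) := fun n A B hAB => by
    simpa only [map_sub, sub_nonneg] using hpow n _ (sub_nonneg.2 hAB)
  have hdecr : ∀ n, (ψ ^ n) X ≤ X := by
    intro n
    induction n with
    | zero => simp
    | succ n ih =>
      calc (ψ ^ (n + 1)) X = (ψ ^ n) (ψ X) := by rw [pow_succ]; rfl
        _ ≤ (ψ ^ n) X := hmono n (sub_nonneg.1 h)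
        _ ≤ X := ih
  have hbelow : ∀ n, -(‖X‖ • (ψ ^ n) 1) ≤ (ψ ^ n) X := fun n => by
    simpa only [Algebra.algebraMap_eq_smul_one, map_neg, map_smul_of_tower] using
      hmono n hX.neg_algebraMap_norm_le_self
  refine nonneg_of_tendsto_add hX (A := fun n => ‖X‖ • (ψ ^ n) 1)
    (fun x => by simpa using (hpure x).const_smul ‖X‖) fun n => ?_
  exact neg_le_iff_add_nonneg.1 ((hbelow n).trans (hdecr n))

variable (H) in
def positivityReflecting : Submonoid (𝔅 →L[ℂ] 𝔅) where
  carrier := {T | ∀ X, IsSelfAdjoint X → IsSelfAdjoint (T X) ∧ (0 ≤ T X → 0 ≤ X)}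
  one_mem' _ hX := ⟨hX, id⟩
  mul_mem' hS hT X hX :=
    ⟨(hS _ (hT X hX).1).1, fun h => (hT X hX).2 ((hS _ (hT X hX).1).2 h)⟩

theorem one_sub_mem_positivityReflecting {ψ : 𝔅 →L[ℂ] 𝔅} (hψ : ∀ A, 0 ≤ A → 0 ≤ ψ A)
    (hpure : ∀ x, Tendsto (fun n => (ψ ^ n) 1 x) atTop (𝓝 0)) :
    1 - ψ ∈ positivityReflecting H := fun _ hX =>
  ⟨hX.sub (hX.map' (PositiveLinearMap.mk₀ ψ.toLinearMap hψ)),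
    fun h => ContinuousLinearMap.nonneg_of_nonneg_sub_apply hψ hpure hX h⟩

theorem DeltaCLM_mem_positivityReflecting {k : ℕ} {φ : Fin k → 𝔅 →L[ℂ] 𝔅}
    (hpos : ∀ i A, 0 ≤ A → 0 ≤ φ i A)
    (hpure : ∀ i x, Tendsto (fun n => (φ i ^ n) 1 x) atTop (𝓝 0)) (p : Fin k → ℕ) :
    DeltaCLM φ p ∈ positivityReflecting H :=
  Submonoid.list_prod_mem _ <| List.forall_mem_ofFn_iff.2 fun i =>
    pow_mem (one_sub_mem_positivityReflecting (hpos i) (hpure i)) _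

theorem DeltaCLM_add {k : ℕ} {φ : Fin k → 𝔅 →L[ℂ] 𝔅} (hcomm : ∀ i j, Commute (φ i) (φ j))
    (p q : Fin k → ℕ) : DeltaCLM φ (p + q) = DeltaCLM φ p * DeltaCLM φ q :=
  List.prod_ofFn_pow_add _ (fun i j =>
    (Commute.one_right _).sub_right ((Commute.one_left _).sub_left (hcomm i j))) p q

end

theorem stmt_2_general {H : Type*} [NormedAddCommGroup H] [InnerProductSpace ℂ H] [CompleteSpace H]
    {k : ℕ} (φ : Fin k → ((H →L[ℂ] H) →L[ℂ] (H →L[ℂ] H)))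
    (hpos : ∀ i (A : H →L[ℂ] H), A.IsPositive → ((φ i) A).IsPositive)
    (hcomm : ∀ i j, Commute (φ i) (φ j))
    (Y : H →L[ℂ] H) (hY : IsSelfAdjoint Y)
    (m : Fin k → ℕ)
    (hDm : ((DeltaCLM φ m) Y).IsPositive)
    (hpure : ∀ i (x : H),
      Tendsto (fun p : ℕ => (((φ i) ^ p) (1 : H →L[ℂ] H)) x) atTop (𝓝 0)) :
    (∀ q : Fin k → ℕ, (∀ i, q i ≤ m i) → ((DeltaCLM φ q) Y).IsPositive) ∧ Y.IsPositive := by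
  simp only [← ContinuousLinearMap.nonneg_iff_isPositive] at hpos hDm ⊢
  have hΔ := DeltaCLM_mem_positivityReflecting hpos hpure
  refine ⟨fun q hq => ?_, (hΔ m Y hY).2 hDm⟩
  rw [← tsub_add_cancel_of_le (show q ≤ m from hq), DeltaCLM_add hcomm] at hDm
  exact (hΔ (m - q) _ (hΔ q Y hY).1).2 hDm

/-- **Proposition 1.3 (Popescu).**  Let `Y ∈ B(H)` be self-adjoint, `m ∈ ℤ₊^k`, `m ≠ 0`,
and let `Φ = (φ_1, …, φ_k)` be a `k`-tuple of pairwise commuting, power-bounded, positive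
linear maps on `B(H)` such that `Δ_Φ^m(Y) ≥ 0` and each `φ_i` is pure, i.e.
`φ_i^p(I) → 0` strongly as `p → ∞`.  Then `Δ_Φ^q(Y) ≥ 0` for every `q ∈ ℤ₊^k` with
`q ≤ m`; in particular (taking `q = 0`) `Y ≥ 0`. -/
theorem stmt_2 {H : Type*} [NormedAddCommGroup H] [InnerProductSpace ℂ H] [CompleteSpace H]
    {k : ℕ} (φ : Fin k → ((H →L[ℂ] H) →L[ℂ] (H →L[ℂ] H)))
    (hpos : ∀ i (A : H →L[ℂ] H), A.IsPositive → ((φ i) A).IsPositive)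
    (hpb : ∀ i, ∃ M > (0 : ℝ), ∀ N : ℕ, ‖(φ i) ^ N‖ ≤ M)
    (hcomm : ∀ i j, Commute (φ i) (φ j))
    (Y : H →L[ℂ] H) (hY : IsSelfAdjoint Y)
    (m : Fin k → ℕ) (hm : m ≠ 0)
    (hDm : ((DeltaCLM φ m) Y).IsPositive)
    (hpure : ∀ i (x : H),
      Tendsto (fun p : ℕ => (((φ i) ^ p) (1 : H →L[ℂ] H)) x) atTop (𝓝 0)) :
    (∀ q : Fin k → ℕ, (∀ i, q i ≤ m i) → ((DeltaCLM φ q) Y).IsPositive) ∧ Y.IsPositive :=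
  stmt_2_general φ hpos hcomm Y hY m hDm hpure
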